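/- arXiv:2303.03254 — 2 statements merged into one kernel-verified Lean document; each statement's English description precedes it below -/
import Mathlib

section
/- Let n, k, m be positive integers. For each t = 1,…,n and j = 1,…,m let ā_{tj} ∈ ℝ^k, let K_{tj} be a real symmetric positive semidefinite k×k matrix with diagonal square-root vector γ_{tj}, let z_j ≥ 0, and let b_j ∈ ℝ. Suppose x_1, …, x_n ∈ {0,1}^k are selection vectors (each satisfying ∑_{l=1}^k (x_t)_l ≤ 1) that satisfy the second-order cone constraints ∑_{t=1}^n ā_{tj}ᵀ x_t + z_j · √(∑_{t=1}^n x_tᵀ K_{tj} x_t) ≤ b_j for every j. Then x_1, …, x_n also satisfy the linearized constraints ∑_{t=1}^n (ā_{tj} + (z_j/√n) γ_{tj})ᵀ x_t ≤ b_j for every j. In other words, every feasible point of the integer second-order cone program is feasible for the linearized integer linear program. -/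
open Matrix Finset

/-!
A selection vector `x` is either `0` or a standard basis vector `eₗ`, so for any matrix `K`
the linear form `γ(K)ᵀ x` equals the square root of the quadratic form `xᵀ K x`: both are
`0`, or both are `√(K l l)`. The linearized constraint therefore replaces
`z √(∑ₜ cₜ)` by `(z / √n) ∑ₜ √cₜ` with `cₜ = xₜᵀ Kₜ xₜ ≥ 0`, and the Cauchy–Schwarz
inequality `∑ₜ √cₜ ≤ √n √(∑ₜ cₜ)` shows that this is no larger.
-/

lemma Real.sum_sqrt_div_sqrt_card_le_sqrt_sum {ι : Type*} (s : Finset ι) {f : ι → ℝ}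
    (hf : ∀ i, 0 ≤ f i) : (∑ i ∈ s, √(f i)) / √(#s : ℝ) ≤ √(∑ i ∈ s, f i) := by
  rcases s.eq_empty_or_nonempty with rfl | hs
  · simp
  rw [div_le_iff₀ (by positivity)]
  simpa [mul_comm] using Real.sum_sqrt_mul_sqrt_le s (fun _ => zero_le_one) hf

section Selection

variable {ι : Type*} [Fintype ι] [DecidableEq ι]

lemma eq_zero_or_exists_eq_single_of_selection {x : ι → ℝ} (h01 : ∀ l, x l = 0 ∨ x l = 1)
    (hsum : ∑ l, x l ≤ 1) : x = 0 ∨ ∃ l, x = Pi.single l 1 := by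
  rcases eq_or_ne x 0 with hzero | hzero
  · exact Or.inl hzero
  obtain ⟨l₀, hl₀⟩ := Function.ne_iff.mp hzero
  have hx₀ : x l₀ = 1 := (h01 l₀).resolve_left hl₀
  have hx_nonneg : ∀ l ∈ univ, 0 ≤ x l := fun l _ => by rcases h01 l with h | h <;> simp [h]
  refine Or.inr ⟨l₀, funext fun l => ?_⟩
  rcases eq_or_ne l l₀ with rfl | hl
  · simpa using hx₀
  rw [Pi.single_eq_of_ne hl]
  refine (h01 l).resolve_right fun hx => ?_
  have := add_le_sum hx_nonneg (mem_univ l) (mem_univ l₀) hl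
  linarith

lemma sqrt_diag_dotProduct_eq_sqrt_dotProduct_mulVec_of_selection (K : Matrix ι ι ℝ)
    {x : ι → ℝ} (h01 : ∀ l, x l = 0 ∨ x l = 1) (hsum : ∑ l, x l ≤ 1) :
    (fun l => √(K l l)) ⬝ᵥ x = √(x ⬝ᵥ K *ᵥ x) := by
  rcases eq_zero_or_exists_eq_single_of_selection h01 hsum with rfl | ⟨l, rfl⟩ <;> simp

end Selection

lemma add_mul_dotProduct {ι : Type*} [Fintype ι] (a g v : ι → ℝ) (c : ℝ) :
    (fun l => a l + c * g l) ⬝ᵥ v = a ⬝ᵥ v + c * (g ⬝ᵥ v) := by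
  change (a + c • g) ⬝ᵥ v = _
  rw [add_dotProduct, smul_dotProduct, smul_eq_mul]

theorem soc_feasible_implies_linearized_feasible_general
    (n k m : ℕ)
    (abar : Fin n → Fin m → Fin k → ℝ)
    (K : Fin n → Fin m → Matrix (Fin k) (Fin k) ℝ)
    (hK : ∀ t j, (K t j).PosSemidef)
    (z : Fin m → ℝ) (hz : ∀ j, 0 ≤ z j)
    (b : Fin m → ℝ)
    (x : Fin n → Fin k → ℝ)
    (hx01 : ∀ t l, x t l = 0 ∨ x t l = 1)
    (hxsum : ∀ t, ∑ l, x t l ≤ 1)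
    (hSOC : ∀ j, ∑ t, abar t j ⬝ᵥ x t +
      z j * Real.sqrt (∑ t, x t ⬝ᵥ (K t j).mulVec (x t)) ≤ b j) :
    ∀ j, ∑ t, (fun l => abar t j l + (z j / Real.sqrt n) * Real.sqrt (K t j l l)) ⬝ᵥ x t
      ≤ b j := by
  intro j
  have hquad_nonneg : ∀ t, 0 ≤ x t ⬝ᵥ K t j *ᵥ x t := fun t => by
    simpa using (hK t j).dotProduct_mulVec_nonneg (x t)
  calc ∑ t, (fun l => abar t j l + (z j / √n) * √(K t j l l)) ⬝ᵥ x t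
      = ∑ t, abar t j ⬝ᵥ x t + z j * ((∑ t, √(x t ⬝ᵥ K t j *ᵥ x t)) / √n) := by
        simp only [add_mul_dotProduct, sum_add_distrib, ← mul_sum,
          sqrt_diag_dotProduct_eq_sqrt_dotProduct_mulVec_of_selection _ (hx01 _) (hxsum _)]
        ring
    _ ≤ ∑ t, abar t j ⬝ᵥ x t + z j * √(∑ t, x t ⬝ᵥ K t j *ᵥ x t) := by
        gcongr
        · exact hz j
        · simpa using Real.sum_sqrt_div_sqrt_card_le_sqrt_sum univ hquad_nonneg
    _ ≤ b j := hSOC j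

/-- Every feasible point of the integer second-order cone program is feasible for the
linearized integer linear program: if the selection vectors `x_1, …, x_n` satisfy
`∑_t ā_{tj}ᵀ x_t + z_j √(∑_t x_tᵀ K_{tj} x_t) ≤ b_j` for all `j`, then they satisfy
`∑_t (ā_{tj} + (z_j/√n) γ_{tj})ᵀ x_t ≤ b_j` for all `j`, where `γ_{tj} l = √((K_{tj}) l l)`. -/
theorem soc_feasible_implies_linearized_feasible
    (n k m : ℕ) (hn : 0 < n) (hk : 0 < k) (hm : 0 < m)
    (abar : Fin n → Fin m → Fin k → ℝ)
    (K : Fin n → Fin m → Matrix (Fin k) (Fin k) ℝ)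
    (hK : ∀ t j, (K t j).PosSemidef)
    (z : Fin m → ℝ) (hz : ∀ j, 0 ≤ z j)
    (b : Fin m → ℝ)
    (x : Fin n → Fin k → ℝ)
    (hx01 : ∀ t l, x t l = 0 ∨ x t l = 1)
    (hxsum : ∀ t, ∑ l, x t l ≤ 1)
    (hSOC : ∀ j, ∑ t, abar t j ⬝ᵥ x t +
      z j * Real.sqrt (∑ t, x t ⬝ᵥ (K t j).mulVec (x t)) ≤ b j) :
    ∀ j, ∑ t, (fun l => abar t j l + (z j / Real.sqrt n) * Real.sqrt (K t j l l)) ⬝ᵥ x t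
      ≤ b j :=
  soc_feasible_implies_linearized_feasible_general n k m abar K hK z hz b x hx01 hxsum hSOC
end

section
/- Let n, k, m be positive integers. For each t = 1,…,n and j = 1,…,m let c_t ∈ ℝ^k, ā_{tj} ∈ ℝ^k, let K_{tj} be a real symmetric positive semidefinite k×k matrix with diagonal square-root vector γ_{tj}, let z_j ≥ 0, and let b_j ∈ ℝ. Define F_SOC as the set of tuples (x_1,…,x_n) of selection vectors satisfying ∑_{t=1}^n ā_{tj}ᵀ x_t + z_j √(∑_{t=1}^n x_tᵀ K_{tj} x_t) ≤ b_j for all j, and F_LIN as the set of tuples of selection vectors satisfying ∑_{t=1}^n (ā_{tj} + (z_j/√n) γ_{tj})ᵀ x_t ≤ b_j for all j. Then the maximum of the objective ∑_{t=1}^n c_tᵀ x_t over F_LIN is at least its maximum over F_SOC (whenever F_SOC is nonempty); equivalently, the linearized integer linear program is a relaxation of the integer second-order cone program. -/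
open Matrix Finset

/-!
A selection vector `v` is `0` or a basis vector `e_l`, so `γ(K) ⬝ᵥ v = √(vᵀ K v)`: on selection
vectors the linearized constraint is `∑ₜ āₜᵀ xₜ + (z / √n) ∑ₜ √(xₜᵀ Kₜ xₜ)`. By Cauchy–Schwarz
`∑ₜ √aₜ ≤ √n √(∑ₜ aₜ)`, so it is dominated by the SOC constraint. Hence `F_SOC ⊆ F_LIN`, and both
sets consist of `0`-`1` vectors, so the objective is bounded on `F_LIN` and the suprema compare.
-/

def IsSelection {ι : Type*} [Fintype ι] (v : ι → ℝ) : Prop :=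
  (∀ l, v l = 0 ∨ v l = 1) ∧ ∑ l, v l ≤ 1

namespace IsSelection

variable {ι : Type*} [Fintype ι] {v : ι → ℝ}

theorem eq_zero_or_eq_single [DecidableEq ι] (hv : IsSelection v) :
    v = 0 ∨ ∃ l, v = Pi.single l 1 := by
  obtain ⟨h01, hsum⟩ := hv
  by_cases hzero : ∀ l, v l = 0
  · exact Or.inl (funext hzero)
  push Not at hzero
  obtain ⟨l, hl⟩ := hzero
  have hvl : v l = 1 := (h01 l).resolve_left hl
  refine Or.inr ⟨l, funext fun i => ?_⟩
  rcases eq_or_ne i l with rfl | hil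
  · simp [hvl]
  rw [Pi.single_eq_of_ne hil]
  refine (h01 i).resolve_right fun hvi => ?_
  have hpair : v i + v l ≤ ∑ l, v l := by
    rw [← sum_pair hil]
    exact sum_le_sum_of_subset_of_nonneg (subset_univ _) fun j _ _ => by
      rcases h01 j with h | h <;> simp [h]
  linarith

theorem sqrt_diag_dotProduct (hv : IsSelection v) (K : Matrix ι ι ℝ) :
    (fun l => √(K l l)) ⬝ᵥ v = √(v ⬝ᵥ K *ᵥ v) := by
  classical
  rcases hv.eq_zero_or_eq_single with rfl | ⟨l, rfl⟩ <;> simp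

end IsSelection

theorem sum_sqrt_le_sqrt_card_mul_sqrt_sum {τ : Type*} [Fintype τ] {a : τ → ℝ}
    (ha : ∀ t, 0 ≤ a t) : ∑ t, √(a t) ≤ √(Fintype.card τ) * √(∑ t, a t) := by
  simpa using Real.sum_sqrt_mul_sqrt_le univ (fun _ => zero_le_one) ha

theorem div_sqrt_card_mul_sum_sqrt_le {τ : Type*} [Fintype τ] {a : τ → ℝ}
    (ha : ∀ t, 0 ≤ a t) {z : ℝ} (hz : 0 ≤ z) :
    z / √(Fintype.card τ) * ∑ t, √(a t) ≤ z * √(∑ t, a t) := by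
  calc z / √(Fintype.card τ) * ∑ t, √(a t)
      ≤ z / √(Fintype.card τ) * (√(Fintype.card τ) * √(∑ t, a t)) :=
        mul_le_mul_of_nonneg_left (sum_sqrt_le_sqrt_card_mul_sqrt_sum ha) (by positivity)
    _ = (z / √(Fintype.card τ) * √(Fintype.card τ)) * √(∑ t, a t) := by ring
    _ ≤ z * √(∑ t, a t) := by
        rcases eq_or_ne √(Fintype.card τ) 0 with h | h
        · simp only [h, mul_zero, zero_mul]
          positivity
        · rw [div_mul_cancel₀ z h]

theorem linearized_constraint_le_soc_constraint {τ ι : Type*} [Fintype τ] [Fintype ι]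
    (a : τ → ι → ℝ) {K : τ → Matrix ι ι ℝ} (hK : ∀ t, (K t).PosSemidef) {z : ℝ} (hz : 0 ≤ z)
    {x : τ → ι → ℝ} (hx : ∀ t, IsSelection (x t)) :
    ∑ t, (fun l => a t l + z / √(Fintype.card τ) * √(K t l l)) ⬝ᵥ x t ≤
      ∑ t, a t ⬝ᵥ x t + z * √(∑ t, x t ⬝ᵥ K t *ᵥ x t) := by
  have hquad : ∀ t, 0 ≤ x t ⬝ᵥ K t *ᵥ x t := fun t => (hK t).dotProduct_mulVec_nonneg (x t)
  calc ∑ t, (fun l => a t l + z / √(Fintype.card τ) * √(K t l l)) ⬝ᵥ x t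
      = ∑ t, a t ⬝ᵥ x t + z / √(Fintype.card τ) * ∑ t, √(x t ⬝ᵥ K t *ᵥ x t) := by
        rw [mul_sum, ← sum_add_distrib]
        refine sum_congr rfl fun t _ => ?_
        rw [← (hx t).sqrt_diag_dotProduct]
        change (a t + (z / √(Fintype.card τ)) • fun l => √(K t l l)) ⬝ᵥ x t = _
        rw [add_dotProduct, smul_dotProduct, smul_eq_mul]
    _ ≤ ∑ t, a t ⬝ᵥ x t + z * √(∑ t, x t ⬝ᵥ K t *ᵥ x t) :=
        add_le_add_right (div_sqrt_card_mul_sum_sqrt_le hquad hz) _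

theorem finite_setOf_forall_eq_zero_or_eq_one {σ ι : Type*} [Finite σ] [Finite ι] :
    {x : σ → ι → ℝ | ∀ t l, x t l = 0 ∨ x t l = 1}.Finite := by
  refine (Set.Finite.pi fun _ => Set.Finite.pi fun _ => Set.toFinite {(0 : ℝ), 1}).subset ?_
  intro x hx
  simpa [Set.mem_pi] using hx

theorem linearized_relaxation_of_soc_general
    (n k m : ℕ)
    (c : Fin n → Fin k → ℝ)
    (abar : Fin n → Fin m → Fin k → ℝ)
    (K : Fin n → Fin m → Matrix (Fin k) (Fin k) ℝ)
    (hK : ∀ t j, (K t j).PosSemidef)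
    (z : Fin m → ℝ) (hz : ∀ j, 0 ≤ z j)
    (b : Fin m → ℝ)
    (FSOC FLIN : Set (Fin n → Fin k → ℝ))
    (hFSOC : FSOC = {x | (∀ t l, x t l = 0 ∨ x t l = 1) ∧ (∀ t, ∑ l, x t l ≤ 1) ∧
      ∀ j, ∑ t, abar t j ⬝ᵥ x t +
        z j * Real.sqrt (∑ t, x t ⬝ᵥ (K t j).mulVec (x t)) ≤ b j})
    (hFLIN : FLIN = {x | (∀ t l, x t l = 0 ∨ x t l = 1) ∧ (∀ t, ∑ l, x t l ≤ 1) ∧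
      ∀ j, ∑ t, (fun l => abar t j l + (z j / Real.sqrt n) * Real.sqrt (K t j l l)) ⬝ᵥ x t
        ≤ b j})
    (hne : FSOC.Nonempty) :
    sSup ((fun x => ∑ t, c t ⬝ᵥ x t) '' FSOC) ≤
      sSup ((fun x => ∑ t, c t ⬝ᵥ x t) '' FLIN) := by
  have hsub : FSOC ⊆ FLIN := by
    rw [hFSOC, hFLIN]
    rintro x ⟨h01, hsum, hsoc⟩
    refine ⟨h01, hsum, fun j => le_trans ?_ (hsoc j)⟩
    simpa only [Fintype.card_fin] using linearized_constraint_le_soc_constraint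
      (fun t => abar t j) (fun t => hK t j) (hz j) fun t => ⟨h01 t, hsum t⟩
  have hbdd : BddAbove ((fun x => ∑ t, c t ⬝ᵥ x t) '' FLIN) := by
    refine (finite_setOf_forall_eq_zero_or_eq_one.subset ?_).image _ |>.bddAbove
    rw [hFLIN]
    exact fun x hx => hx.1
  exact csSup_le_csSup hbdd (hne.image _) (Set.image_mono hsub)

/-- The linearized integer linear program is a relaxation of the integer second-order cone
program: whenever the SOC feasible set `F_SOC` is nonempty, the maximum of the objective
`∑_t c_tᵀ x_t` over the linearized feasible set `F_LIN` is at least its maximum over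
`F_SOC`. Both feasible sets consist of tuples of selection vectors (0-1 vectors with
at most one nonzero entry), so they are finite and the suprema are attained. -/
theorem linearized_relaxation_of_soc
    (n k m : ℕ) (hn : 0 < n) (hk : 0 < k) (hm : 0 < m)
    (c : Fin n → Fin k → ℝ)
    (abar : Fin n → Fin m → Fin k → ℝ)
    (K : Fin n → Fin m → Matrix (Fin k) (Fin k) ℝ)
    (hK : ∀ t j, (K t j).PosSemidef)
    (z : Fin m → ℝ) (hz : ∀ j, 0 ≤ z j)
    (b : Fin m → ℝ)
    (FSOC FLIN : Set (Fin n → Fin k → ℝ))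
    (hFSOC : FSOC = {x | (∀ t l, x t l = 0 ∨ x t l = 1) ∧ (∀ t, ∑ l, x t l ≤ 1) ∧
      ∀ j, ∑ t, abar t j ⬝ᵥ x t +
        z j * Real.sqrt (∑ t, x t ⬝ᵥ (K t j).mulVec (x t)) ≤ b j})
    (hFLIN : FLIN = {x | (∀ t l, x t l = 0 ∨ x t l = 1) ∧ (∀ t, ∑ l, x t l ≤ 1) ∧
      ∀ j, ∑ t, (fun l => abar t j l + (z j / Real.sqrt n) * Real.sqrt (K t j l l)) ⬝ᵥ x t
        ≤ b j})
    (hne : FSOC.Nonempty) :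
    sSup ((fun x => ∑ t, c t ⬝ᵥ x t) '' FSOC) ≤
      sSup ((fun x => ∑ t, c t ⬝ᵥ x t) '' FLIN) :=
  linearized_relaxation_of_soc_general n k m c abar K hK z hz b FSOC FLIN hFSOC hFLIN hne
end
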